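/- arXiv:1811.06963 — 2 statements merged into one kernel-verified Lean document; each statement's English description precedes it below -/
import Mathlib

section
/- Let a, a' > 0 with a ≠ a', and let x = (a', 0, …, 0, a) ∈ ℂ^{N+1}. If x' ∈ ℂ^{N+1} satisfies |x̂'(ω)|² = |x̂(ω)|² for all ω on the unit circle and |x'[N]| = a, then x' = λx for some λ ∈ ℂ with |λ| = 1. -/
open Polynomial ComplexConjugate

/-! Multiplying the intensity `|ŷ(ω)|²`, a Laurent polynomial with exponents in `[-N, N]`, by `ω ^ N`
gives a genuine polynomial, which is determined by its values on the infinite unit circle. Its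
coefficients of `X ^ (2N)` and `X ^ N` give `x'[N] conj(x'[0]) = a a'` and
`∑ |x'[n]|² = a'² + a²`. With `|x'[N]| = a` the first forces `x'[0] = λ a'` for `λ = x'[N] / a`,
and then the second leaves no energy for the middle entries. -/

lemma sphere_zero_one_infinite : (Metric.sphere (0 : ℂ) 1).Infinite :=
  (isPreconnected_sphere (by simp) 0 1).infinite_of_nontrivial
    ⟨1, by simp, -1, by simp, by norm_num⟩

noncomputable def autocorrelationPoly (N : ℕ) (y : Fin (N + 1) → ℂ) : ℂ[X] :=
  (∑ n : Fin (N + 1), C (y n) * X ^ (n : ℕ)) *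
    ∑ m : Fin (N + 1), C (conj (y m)) * X ^ (N - m)

lemma pow_sub_eq_pow_mul_conj_pow {ω : ℂ} (hω : ‖ω‖ = 1) {m N : ℕ} (hm : m ≤ N) :
    ω ^ (N - m) = ω ^ N * conj ω ^ m := by
  have hunit : ω * conj ω = 1 := by simp [Complex.mul_conj', hω]
  rw [← Nat.sub_add_cancel hm, pow_add, Nat.add_sub_cancel, mul_assoc, ← mul_pow, hunit,
    one_pow, mul_one]

lemma eval_autocorrelationPoly (N : ℕ) (y : Fin (N + 1) → ℂ) {ω : ℂ} (hω : ‖ω‖ = 1) :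
    (autocorrelationPoly N y).eval ω =
      ((‖∑ n : Fin (N + 1), y n * ω ^ (n : ℕ)‖ ^ 2 : ℝ) : ℂ) * ω ^ N := by
  have hrev : ∑ m : Fin (N + 1), conj (y m) * ω ^ (N - m) =
      conj (∑ n : Fin (N + 1), y n * ω ^ (n : ℕ)) * ω ^ N := by
    simp only [map_sum, map_mul, map_pow, Finset.sum_mul]
    refine Finset.sum_congr rfl fun m _ => ?_
    rw [pow_sub_eq_pow_mul_conj_pow hω m.is_le]
    ring
  simp only [autocorrelationPoly, eval_mul, eval_finsetSum, eval_C, eval_pow, eval_X, hrev,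
    ← mul_assoc, Complex.mul_conj', Complex.ofReal_pow]

lemma autocorrelationPoly_eq_of_norm_eq {N : ℕ} {y z : Fin (N + 1) → ℂ}
    (h : ∀ ω : ℂ, ‖ω‖ = 1 →
      ‖∑ n : Fin (N + 1), y n * ω ^ (n : ℕ)‖ ^ 2 = ‖∑ n : Fin (N + 1), z n * ω ^ (n : ℕ)‖ ^ 2) :
    autocorrelationPoly N y = autocorrelationPoly N z := by
  refine eq_of_infinite_eval_eq _ _ (sphere_zero_one_infinite.mono fun ω hω => ?_)
  have hω : ‖ω‖ = 1 := by simpa using hω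
  simp only [Set.mem_ofPred_eq, eval_autocorrelationPoly N _ hω, h ω hω]

lemma coeff_autocorrelationPoly (N : ℕ) (y : Fin (N + 1) → ℂ) (k : ℕ) :
    (autocorrelationPoly N y).coeff k =
      ∑ n : Fin (N + 1), ∑ m : Fin (N + 1),
        if (n : ℕ) + (N - m) = k then y n * conj (y m) else 0 := by
  simp only [autocorrelationPoly, Finset.sum_mul_sum, finsetSum_coeff]
  refine Finset.sum_congr rfl fun n _ => Finset.sum_congr rfl fun m _ => ?_
  rw [mul_mul_mul_comm, ← C_mul, ← pow_add, coeff_C_mul_X_pow]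
  exact if_congr eq_comm rfl rfl

lemma coeff_autocorrelationPoly_self (N : ℕ) (y : Fin (N + 1) → ℂ) :
    (autocorrelationPoly N y).coeff N = ((∑ n : Fin (N + 1), ‖y n‖ ^ 2 : ℝ) : ℂ) := by
  have hdiag (n m : Fin (N + 1)) : (n : ℕ) + (N - m) = N ↔ n = m := by
    rw [Fin.ext_iff]; have := m.is_le; omega
  simp only [coeff_autocorrelationPoly, hdiag, Finset.sum_ite_eq, Finset.mem_univ, if_true,
    Complex.mul_conj', Complex.ofReal_sum, Complex.ofReal_pow]

lemma coeff_autocorrelationPoly_two_mul (N : ℕ) (y : Fin (N + 1) → ℂ) :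
    (autocorrelationPoly N y).coeff (2 * N) = y (Fin.last N) * conj (y 0) := by
  have hcorner (n m : Fin (N + 1)) : (n : ℕ) + (N - m) = 2 * N ↔ n = Fin.last N ∧ m = 0 := by
    rw [Fin.ext_iff, Fin.ext_iff, Fin.val_last, Fin.val_zero]
    have := n.is_le; have := m.is_le; omega
  simp only [coeff_autocorrelationPoly, hcorner, ite_and, Finset.sum_ite_irrel, Finset.sum_ite_eq',
    Finset.mem_univ, if_true, Finset.sum_const_zero]

lemma eq_zero_of_sum_norm_sq_eq {ι E : Type*} [Fintype ι] [DecidableEq ι] [NormedAddCommGroup E]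
    (y : ι → E) {i j : ι} (hij : i ≠ j) (h : ∑ n, ‖y n‖ ^ 2 = ‖y i‖ ^ 2 + ‖y j‖ ^ 2)
    {n : ι} (hni : n ≠ i) (hnj : n ≠ j) : y n = 0 := by
  have hle := Finset.sum_le_univ_sum_of_nonneg (s := {i, j, n}) (f := fun n => ‖y n‖ ^ 2)
    fun _ => by positivity
  simp only [Finset.sum_insert, Finset.mem_insert, Finset.mem_singleton, hij, hni.symm, hnj.symm,
    or_self, not_false_eq_true, Finset.sum_singleton, h] at hle
  exact norm_eq_zero.mp (by nlinarith [norm_nonneg (y n)])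

lemma eq_div_mul_of_mul_conj_eq {u v : ℂ} {a b : ℝ} (hu : ‖u‖ = a) (ha : a ≠ 0)
    (h : u * conj v = a * b) : v = u / a * b := by
  have hconj : conj u * v = a * b := by simpa [mul_comm] using congrArg conj h
  have hnorm : u * conj u = (a : ℂ) ^ 2 := by rw [Complex.mul_conj', hu]
  have ha' : (a : ℂ) ≠ 0 := Complex.ofReal_ne_zero.mpr ha
  rw [div_mul_eq_mul_div, eq_div_iff ha']
  refine mul_left_cancel₀ ha' ?_
  linear_combination u * hconj - v * hnorm

theorem uniqueness_with_fixed_last_modulus_general (N : ℕ) (hN : 0 < N) (a a' : ℝ)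
    (ha : 0 < a) (x x' : Fin (N + 1) → ℂ)
    (hx : x = fun n => if n = 0 then (a' : ℂ) else if n = Fin.last N then (a : ℂ) else 0)
    (hint : ∀ ω : ℂ, ‖ω‖ = 1 →
      ‖∑ n : Fin (N + 1), x' n * ω ^ (n : ℕ)‖ ^ 2 =
        ‖∑ n : Fin (N + 1), x n * ω ^ (n : ℕ)‖ ^ 2)
    (hlast : ‖x' (Fin.last N)‖ = a) :
    ∃ lam : ℂ, ‖lam‖ = 1 ∧ x' = fun n => lam * x n := by
  have hlast0 : Fin.last N ≠ 0 := Fin.ext_iff.not.mpr hN.ne'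
  have hx0 : x 0 = a' := by simp [hx]
  have hxN : x (Fin.last N) = a := by simp [hx, hlast0]
  have hP := autocorrelationPoly_eq_of_norm_eq hint
  have hcross : x' (Fin.last N) * conj (x' 0) = a * a' := by
    simpa [coeff_autocorrelationPoly_two_mul, hx0, hxN] using congrArg (coeff · (2 * N)) hP
  have hx'0 : x' 0 = x' (Fin.last N) / a * a' := eq_div_mul_of_mul_conj_eq hlast ha.ne' hcross
  have hlam : ‖x' (Fin.last N) / a‖ = 1 := by simp [hlast, abs_of_pos ha, ha.ne']
  have henergy : ∑ n, ‖x' n‖ ^ 2 = ‖x' 0‖ ^ 2 + ‖x' (Fin.last N)‖ ^ 2 := by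
    have hcoeff := congrArg (coeff · N) hP
    simp only [coeff_autocorrelationPoly_self, Complex.ofReal_inj] at hcoeff
    rw [hcoeff, Fintype.sum_eq_add 0 (Fin.last N) hlast0.symm (fun n hn => by simp [hx, hn.1, hn.2]),
      hx0, hxN, hx'0, norm_mul, hlam, hlast]
    simp
  refine ⟨x' (Fin.last N) / a, hlam, funext fun n => ?_⟩
  by_cases h0 : n = 0
  · rw [h0, hx0, hx'0]
  by_cases hl : n = Fin.last N
  · rw [hl, hxN, div_mul_cancel₀ _ (by exact_mod_cast ha.ne')]
  rw [eq_zero_of_sum_norm_sq_eq x' hlast0.symm henergy h0 hl]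
  simp [hx, h0, hl]

/-- For `x = (a', 0, …, 0, a)` with `a, a' > 0`, `a ≠ a'`: any `x'` with the same
Fourier intensity function and `|x'[N]| = a` equals `λ x` for some unimodular `λ`. -/
theorem uniqueness_with_fixed_last_modulus (N : ℕ) (hN : 0 < N) (a a' : ℝ)
    (ha : 0 < a) (ha' : 0 < a') (hne : a ≠ a') (x x' : Fin (N + 1) → ℂ)
    (hx : x = fun n => if n = 0 then (a' : ℂ) else if n = Fin.last N then (a : ℂ) else 0)
    (hint : ∀ ω : ℂ, ‖ω‖ = 1 →
      ‖∑ n : Fin (N + 1), x' n * ω ^ (n : ℕ)‖ ^ 2 =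
        ‖∑ n : Fin (N + 1), x n * ω ^ (n : ℕ)‖ ^ 2)
    (hlast : ‖x' (Fin.last N)‖ = a) :
    ∃ lam : ℂ, ‖lam‖ = 1 ∧ x' = fun n => lam * x n :=
  uniqueness_with_fixed_last_modulus_general N hN a a' ha x x' hx hint hlast
end

section
/- For the vector x = (a',0,…,0,a) with a, a' > 0, a ≠ a', any x' ∈ ℂ^{N+1} with the same Fourier intensity function as x and with x'[N] = a satisfies x' = x exactly (not just up to phase). -/
/-!
Expanding `|∑ x n ω^n|²` on the unit circle gives the trigonometric polynomial
`∑_{n,m} x n · conj (x m) · ω^(n-m)`, so two signals with the same Fourier intensity have the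
same autocorrelation (a polynomial identity after multiplying by `ω^N`, valid on the infinite
unit circle). The autocorrelation at lag `N` is `x'[N] · conj (x'[0]) = a a'`, which pins
`x'[0] = a'` once `x'[N] = a`; at lag `0` it is the energy `a² + a'²`, already used up by these
two entries, so all other entries vanish.
-/

open Complex Polynomial Finset ComplexConjugate

lemma eq_of_sum_norm_sq_le_of_eqOn_support {ι E : Type*} [Fintype ι] [NormedAddCommGroup E]
    {y z : ι → E} (hsum : ∑ i, ‖y i‖ ^ 2 ≤ ∑ i, ‖z i‖ ^ 2)
    (hsupp : ∀ i, z i ≠ 0 → y i = z i) : y = z := by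
  have hpt : ∀ i, ‖y i - z i‖ ^ 2 = ‖y i‖ ^ 2 - ‖z i‖ ^ 2 := by
    intro i
    by_cases hz : z i = 0
    · simp [hz]
    · simp [hsupp i hz]
  have hzero : ∑ i, ‖y i - z i‖ ^ 2 = 0 := by
    refine le_antisymm ?_ (by positivity)
    simpa [hpt, sum_sub_distrib] using hsum
  funext i
  have := (sum_eq_zero_iff_of_nonneg fun j _ => by positivity).1 hzero i (mem_univ i)
  simpa [sub_eq_zero] using this

/-- The autocorrelation of `y` as a polynomial, shifted by `N` so that lags `-N..N` become the
exponents `0..2N` (the natural subtraction never truncates since `m ≤ N`). -/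
noncomputable def autocorrPoly (N : ℕ) (y : Fin (N + 1) → ℂ) : ℂ[X] :=
  ∑ n, ∑ m, C (y n * conj (y m)) * X ^ (N + (n : ℕ) - m)

section Autocorrelation

variable {N : ℕ}

lemma eval_autocorrPoly_of_norm_eq_one (y : Fin (N + 1) → ℂ) {ω : ℂ} (hω : ‖ω‖ = 1) :
    (autocorrPoly N y).eval ω = ((‖∑ n, y n * ω ^ (n : ℕ)‖ ^ 2 : ℝ) : ℂ) * ω ^ N := by
  have hω0 : ω ≠ 0 := norm_ne_zero_iff.1 (by rw [hω]; exact one_ne_zero)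
  have hpow : ∀ n m : Fin (N + 1),
      ω ^ (N + n - m : ℕ) = ω ^ (n : ℕ) * conj ω ^ (m : ℕ) * ω ^ N := by
    intro n m
    rw [← RCLike.inv_eq_conj hω, pow_sub₀ ω hω0 (by omega), inv_pow, pow_add]
    ring
  simp only [autocorrPoly, eval_finsetSum, eval_mul, eval_C, eval_pow, eval_X, hpow]
  rw [← normSq_eq_norm_sq, ← mul_conj, map_sum, sum_mul_sum, sum_mul]
  refine sum_congr rfl fun n _ => ?_
  rw [sum_mul]
  refine sum_congr rfl fun m _ => ?_
  simp only [map_mul, map_pow]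
  ring

lemma coeff_autocorrPoly (y : Fin (N + 1) → ℂ) (k : ℕ) :
    (autocorrPoly N y).coeff k =
      ∑ n : Fin (N + 1), ∑ m : Fin (N + 1),
        if k = N + (n : ℕ) - m then y n * conj (y m) else 0 := by
  simp only [autocorrPoly, finsetSum_coeff, coeff_C_mul, coeff_X_pow, mul_ite, mul_one, mul_zero]

lemma coeff_autocorrPoly_two_mul (y : Fin (N + 1) → ℂ) :
    (autocorrPoly N y).coeff (2 * N) = y (Fin.last N) * conj (y 0) := by
  have hcond : ∀ n m : Fin (N + 1), 2 * N = N + n - m ↔ n = Fin.last N ∧ m = 0 := by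
    intro n m
    simp only [Fin.ext_iff, Fin.val_last, Fin.val_zero]
    omega
  simp [coeff_autocorrPoly, hcond, ite_and]

lemma coeff_autocorrPoly_self (y : Fin (N + 1) → ℂ) :
    (autocorrPoly N y).coeff N = ((∑ n, ‖y n‖ ^ 2 : ℝ) : ℂ) := by
  have hcond : ∀ n m : Fin (N + 1), N = N + n - m ↔ n = m := by
    intro n m
    simp only [Fin.ext_iff]
    omega
  simp [coeff_autocorrPoly, hcond, mul_conj, normSq_eq_norm_sq]

lemma autocorrPoly_eq_of_intensity_eq {y z : Fin (N + 1) → ℂ}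
    (h : ∀ ω : ℂ, ‖ω‖ = 1 →
      ‖∑ n, y n * ω ^ (n : ℕ)‖ ^ 2 = ‖∑ n, z n * ω ^ (n : ℕ)‖ ^ 2) :
    autocorrPoly N y = autocorrPoly N z := by
  have hcircle : (Metric.sphere (0 : ℂ) 1).Infinite := by
    refine (isConnected_sphere ?_ 0 zero_le_one).isPreconnected.infinite_of_nontrivial
      ⟨1, by simp, -1, by simp, by norm_num⟩
    rw [Complex.rank_real_complex]
    norm_num
  refine eq_of_infinite_eval_eq _ _ (hcircle.mono fun ω hω => ?_)
  have hω : ‖ω‖ = 1 := by simpa using hω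
  simp [eval_autocorrPoly_of_norm_eq_one _ hω, h ω hω]

end Autocorrelation

theorem uniqueness_with_fixed_last_entry_general (N : ℕ) (hN : 0 < N) (a a' : ℝ)
    (ha : 0 < a) (x x' : Fin (N + 1) → ℂ)
    (hx : x = fun n => if n = 0 then (a' : ℂ) else if n = Fin.last N then (a : ℂ) else 0)
    (hint : ∀ ω : ℂ, ‖ω‖ = 1 →
      ‖∑ n : Fin (N + 1), x' n * ω ^ (n : ℕ)‖ ^ 2 =
        ‖∑ n : Fin (N + 1), x n * ω ^ (n : ℕ)‖ ^ 2)
    (hlast : x' (Fin.last N) = (a : ℂ)) :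
    x' = x := by
  have hlast_ne : Fin.last N ≠ 0 := Fin.ext_iff.not.2 (by simpa using hN.ne')
  have hA := autocorrPoly_eq_of_intensity_eq hint
  have hfirst : x' 0 = a' := by
    have h := congrArg (coeff · (2 * N)) hA
    simp only [coeff_autocorrPoly_two_mul, hlast, hx, if_neg hlast_ne] at h
    simpa using congrArg conj (mul_left_cancel₀ (ofReal_ne_zero.2 ha.ne') h)
  refine eq_of_sum_norm_sq_le_of_eqOn_support ?_ fun n hn => ?_
  · have h := congrArg (coeff · N) hA
    simp only [coeff_autocorrPoly_self, ofReal_inj] at h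
    exact h.le
  · subst hx
    by_cases h0 : n = 0
    · simpa [h0] using hfirst
    by_cases hn_last : n = Fin.last N
    · simpa [hn_last, hN.ne'] using hlast
    · simp [h0, hn_last] at hn

/-- For `x = (a', 0, …, 0, a)` with `a, a' > 0`, `a ≠ a'`: any `x'` with the same
Fourier intensity function and `x'[N] = a` equals `x` exactly. -/
theorem uniqueness_with_fixed_last_entry (N : ℕ) (hN : 0 < N) (a a' : ℝ)
    (ha : 0 < a) (ha' : 0 < a') (hne : a ≠ a') (x x' : Fin (N + 1) → ℂ)
    (hx : x = fun n => if n = 0 then (a' : ℂ) else if n = Fin.last N then (a : ℂ) else 0)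
    (hint : ∀ ω : ℂ, ‖ω‖ = 1 →
      ‖∑ n : Fin (N + 1), x' n * ω ^ (n : ℕ)‖ ^ 2 =
        ‖∑ n : Fin (N + 1), x n * ω ^ (n : ℕ)‖ ^ 2)
    (hlast : x' (Fin.last N) = (a : ℂ)) :
    x' = x :=
  uniqueness_with_fixed_last_entry_general N hN a a' ha x x' hx hint hlast
end
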